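/- Let d ≥ 1, let U_1, …, U_d ∈ M_n(ℂ) be pairwise commuting unitary matrices, and let A ∈ M_n(ℂ) be a Hermitian unitary matrix commuting with every U_j. Let γ_1, …, γ_{d+1} ∈ M_{d'}(ℂ) be a selfadjoint Clifford family. Then the Hermitian matrix Ĝ = ∑_{j=1}^d Im(U_j) ⊗ γ_j + (d·1 − ∑_{j=1}^d Re(U_j) − A) ⊗ γ_{d+1} is invertible and Sig(Ĝ) = 0. -/

import Mathlib

open Matrix
open scoped Kronecker Matrix.Norms.L2Operator ComplexOrder

noncomputable section

/-- The "real part" `(A + A*)/2` of a square complex matrix. -/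
def mRe {n : ℕ} (A : Matrix (Fin n) (Fin n) ℂ) : Matrix (Fin n) (Fin n) ℂ :=
  (1/2 : ℂ) • (A + Aᴴ)

/-- The "imaginary part" `(A - A*)/(2i)` of a square complex matrix. -/
def mIm {n : ℕ} (A : Matrix (Fin n) (Fin n) ℂ) : Matrix (Fin n) (Fin n) ℂ :=
  (1/(2 * Complex.I) : ℂ) • (A - Aᴴ)

/-- The signature of a Hermitian matrix: number of positive eigenvalues minus the
number of negative eigenvalues, counted with multiplicity (junk value `0` if the
matrix is not Hermitian). -/
def matSig {m : Type*} [Fintype m] [DecidableEq m] (B : Matrix m m ℂ) : ℤ :=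
  if hB : B.IsHermitian then
    ((Finset.univ.filter fun i => 0 < hB.eigenvalues i).card : ℤ) -
    ((Finset.univ.filter fun i => hB.eigenvalues i < 0).card : ℤ)
  else 0

/-!
Write `Ĝ = ∑ₖ Bₖ ⊗ γₖ` with `Bₖ = Im Uₖ` for `k ≤ d` and `B_{d+1} = d - ∑ⱼ Re Uⱼ - A`. All `Bₖ`
lie in the commutative star algebra generated by the commuting unitaries `U₁, …, U_d, A`, so they
are commuting Hermitian matrices, and the Clifford relations give `Ĝ² = P ⊗ 1` with
`P = ∑ₖ Bₖ²`.

Invertibility: put `V = (U₁, …, U_d, A)`, `Cₖ = 1 - Re Vₖ ≥ 0` and `S = ∑ₖ Cₖ`. Since `Re A = A`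
and `Im A = 0`, `B_{d+1} = S - 1` and `P = ∑ₖ (Im Vₖ)² + (S - 1)²`; with `(Im Vₖ)² = 2Cₖ - Cₖ²`
this is `1 + ∑ₖ Cₖ (S - Cₖ)`, and each `Cₖ (S - Cₖ)` is a product of commuting positive
semidefinite matrices, so `P ≥ 1`.

Signature: `Sig Ĝ = tr (Ĝ |Ĝ|⁻¹)` and `|Ĝ|⁻¹ = P^{-1/2} ⊗ 1`, so
`Sig Ĝ = ∑ₖ tr (Bₖ P^{-1/2}) tr γₖ = 0`: each `γₖ` anticommutes with some other `γₗ` (there are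
`d + 1 ≥ 2` of them) and is therefore traceless.
-/

theorem Commute.star_right_of_mem_unitary {R : Type*} [Monoid R] [StarMul R] {a u : R}
    (h : Commute a u) (hu : u ∈ unitary R) : Commute a (star u) := calc
  a * star u = star u * (u * a) * star u := by
    rw [← mul_assoc, Unitary.star_mul_self_of_mem hu, one_mul]
  _ = star u * a := by
    rw [← h.eq, mul_assoc, mul_assoc, Unitary.mul_star_self_of_mem hu, mul_one]

theorem commute_of_mem_starAlgebra_adjoin {R A : Type*} [CommSemiring R] [StarRing R]
    [Semiring A] [StarRing A] [Algebra R A] [StarModule R A] {s : Set A}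
    (hu : ∀ x ∈ s, x ∈ unitary A) (hc : ∀ x ∈ s, ∀ y ∈ s, Commute x y) {x y : A}
    (hx : x ∈ StarAlgebra.adjoin R s) (hy : y ∈ StarAlgebra.adjoin R s) : Commute x y :=
  have := StarAlgebra.isMulCommutative_adjoin R (fun x hx y hy => (hc x hx y hy).eq)
    fun x hx y hy => ((hc x hx y hy).star_right_of_mem_unitary (hu y hy)).eq
  setLike_mul_comm hx hy

namespace Matrix

section Kronecker

variable {R : Type*} [CommSemiring R]

theorem sum_kronecker {ι l m l' m' : Type*} (s : Finset ι) (A : ι → Matrix l m R)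
    (B : Matrix l' m' R) : (∑ i ∈ s, A i) ⊗ₖ B = ∑ i ∈ s, A i ⊗ₖ B := by
  ext
  simp [kroneckerMap_apply, sum_apply, Finset.sum_mul]

theorem isHermitian_sum_kronecker [StarRing R] {ι m q : Type*} (s : Finset ι)
    {B : ι → Matrix m m R} {γ : ι → Matrix q q R} (hB : ∀ k ∈ s, (B k).IsHermitian)
    (hγ : ∀ k ∈ s, (γ k).IsHermitian) : (∑ k ∈ s, B k ⊗ₖ γ k).IsHermitian :=
  isSelfAdjoint_sum s fun k hk => by
    simp [IsSelfAdjoint, star_eq_conjTranspose, conjTranspose_kronecker, (hB k hk).eq,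
      (hγ k hk).eq]

variable {n p : Type*} [Fintype n] [DecidableEq n] [Fintype p] [DecidableEq p]

variable (p R) in
def kroneckerOneStarAlgHom [StarRing R] : Matrix n n R →⋆ₐ[R] Matrix (n × p) (n × p) R where
  toFun X := X ⊗ₖ 1
  map_one' := one_kronecker_one
  map_mul' X Y := by rw [← mul_kronecker_mul, one_mul]
  map_zero' := zero_kronecker _
  map_add' X Y := add_kronecker _ _ _
  commutes' r := by simp [Algebra.algebraMap_eq_smul_one, smul_kronecker]
  map_star' X := by simp [star_eq_conjTranspose, conjTranspose_kronecker]

@[simp]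
theorem kroneckerOneStarAlgHom_apply [StarRing R] (X : Matrix n n R) :
    kroneckerOneStarAlgHom R p X = X ⊗ₖ 1 := rfl

theorem cfc_kronecker_one {𝕜 : Type*} [RCLike 𝕜] {X : Matrix n n 𝕜} (hX : X.IsHermitian)
    (f : ℝ → ℝ) : cfc f (X ⊗ₖ (1 : Matrix p p 𝕜)) = cfc f X ⊗ₖ 1 :=
  ((kroneckerOneStarAlgHom 𝕜 p).map_cfc f X (finite_real_spectrum.continuousOn _)
    (kroneckerOneStarAlgHom 𝕜 p).toLinearMap.continuous_of_finiteDimensional hX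
    (IsSelfAdjoint.map hX _)).symm

end Kronecker

section Clifford

variable {ι p R : Type*} [DecidableEq ι] [Fintype p] [DecidableEq p]

def IsCliffordFamily [CommRing R] (γ : ι → Matrix p p R) : Prop :=
  ∀ k l, γ k * γ l + γ l * γ k = (if k = l then (2 : R) else 0) • 1

namespace IsCliffordFamily

variable [Field R] {γ : ι → Matrix p p R}

theorem mul_self [CharZero R] (hγ : IsCliffordFamily γ) (k : ι) : γ k * γ k = 1 := by
  have h := hγ k k
  rw [if_pos rfl, ← two_smul R] at h
  exact smul_right_injective _ two_ne_zero h

theorem anticomm (hγ : IsCliffordFamily γ) {k l : ι} (hkl : k ≠ l) :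
    γ k * γ l = -(γ l * γ k) := by
  have h := hγ k l
  rw [if_neg hkl, zero_smul] at h
  exact eq_neg_of_add_eq_zero_left h

theorem trace_eq_zero [CharZero R] (hγ : IsCliffordFamily γ) {k l : ι} (hkl : k ≠ l) :
    trace (γ k) = 0 := by
  have h : trace (γ k) = -trace (γ k) := calc
    trace (γ k) = trace (γ l * (γ k * γ l)) := by
      rw [trace_mul_comm, mul_assoc, hγ.mul_self, mul_one]
    _ = -trace (γ k) := by
      rw [hγ.anticomm hkl, mul_neg, ← mul_assoc, hγ.mul_self, one_mul, trace_neg]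
  exact CharZero.eq_neg_self_iff.mp h

theorem sum_kronecker_mul_self [Fintype ι] [CharZero R] {n : Type*} [Fintype n]
    (hγ : IsCliffordFamily γ) {B : ι → Matrix n n R} (hB : ∀ k l, Commute (B k) (B l)) :
    (∑ k, B k ⊗ₖ γ k) * (∑ k, B k ⊗ₖ γ k) = (∑ k, B k * B k) ⊗ₖ 1 := by
  set G := ∑ k, B k ⊗ₖ γ k
  have hG : G * G = ∑ k, ∑ l, (B k * B l) ⊗ₖ (γ k * γ l) := by
    simp only [G, Finset.sum_mul_sum, mul_kronecker_mul]
  -- the same expansion with `k` and `l` swapped; adding both symmetrises `γ k * γ l`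
  have hG' : G * G = ∑ k, ∑ l, (B k * B l) ⊗ₖ (γ l * γ k) := by
    rw [hG, Finset.sum_comm]
    simp only [(hB _ _).eq]
  have h2 : G * G + G * G = (2 : R) • ((∑ k, B k * B k) ⊗ₖ 1) := by
    nth_rw 2 [hG']
    rw [hG]
    simp only [← Finset.sum_add_distrib, ← kronecker_add, hγ _ _, kronecker_smul]
    simp only [ite_smul, zero_smul, Finset.sum_ite_eq, Finset.mem_univ, if_true,
      ← Finset.smul_sum, sum_kronecker]
  rw [← two_smul R] at h2
  exact smul_right_injective _ two_ne_zero h2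

end IsCliffordFamily

end Clifford

section Signature

variable {n : Type*} [Fintype n] [DecidableEq n]

theorem IsHermitian.trace_cfc {𝕜 : Type*} [RCLike 𝕜] {B : Matrix n n 𝕜} (hB : B.IsHermitian)
    (f : ℝ → ℝ) : trace (cfc f B) = ∑ i, (f (hB.eigenvalues i) : 𝕜) := by
  rw [hB.cfc_eq, IsHermitian.cfc, Unitary.conjStarAlgAut_apply, trace_mul_cycle,
    Unitary.star_mul_self_of_mem hB.eigenvectorUnitary.2, one_mul, trace_diagonal]
  rfl

theorem sum_sign_eq_card_sub_card {ι : Type*} [Fintype ι] (f : ι → ℝ) :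
    ∑ i, (SignType.sign (f i) : ℤ) =
      ((Finset.univ.filter fun i => 0 < f i).card : ℤ) -
      ((Finset.univ.filter fun i => f i < 0).card : ℤ) := by
  have h (x : ℝ) :
      (SignType.sign x : ℤ) = (if 0 < x then 1 else 0) - (if x < 0 then 1 else 0) := by
    rcases lt_trichotomy x 0 with hx | rfl | hx
    · simp [hx, hx.not_gt]
    · simp
    · simp [hx, hx.not_gt]
  simp only [h, Finset.sum_sub_distrib, Finset.sum_boole]

theorem matSig_eq_trace_mul_cfc_abs_inv {B : Matrix n n ℂ} (hB : B.IsHermitian) :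
    (matSig B : ℂ) = trace (B * cfc (fun x : ℝ => |x|⁻¹) B) := by
  -- thanks to `0⁻¹ = 0`, `x * |x|⁻¹` is the sign of `x` also at `x = 0`
  have hsign (x : ℝ) : ((x * |x|⁻¹ : ℝ) : ℂ) = ((SignType.sign x : ℤ) : ℂ) := by
    rcases lt_trichotomy x 0 with hx | rfl | hx
    · simp [hx, abs_of_neg, hx.ne]
    · simp
    · simp [hx, abs_of_pos, hx.ne']
  have hmul : B * cfc (fun x : ℝ => |x|⁻¹) B = cfc (fun x : ℝ => x * |x|⁻¹) B := by
    rw [cfc_mul _ _ B (hg := B.finite_real_spectrum.continuousOn _), cfc_id' ℝ B]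
  rw [hmul, hB.trace_cfc, matSig, dif_pos hB, ← sum_sign_eq_card_sub_card, Int.cast_sum]
  exact Finset.sum_congr rfl fun i _ => (hsign _).symm

end Signature

section CliffordSum

variable {ι n p : Type*} [Fintype ι] [DecidableEq ι] [Fintype n] [DecidableEq n] [Fintype p]
  [DecidableEq p] {B : ι → Matrix n n ℂ} {γ : ι → Matrix p p ℂ}

theorem isUnit_sum_kronecker (hγ : IsCliffordFamily γ) (hB : ∀ k l, Commute (B k) (B l))
    (hP : IsUnit (∑ k, B k * B k)) : IsUnit (∑ k, B k ⊗ₖ γ k) := by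
  refine isUnit_of_mul_isUnit_left (y := ∑ k, B k ⊗ₖ γ k) ?_
  rw [hγ.sum_kronecker_mul_self hB]
  exact hP.map (kroneckerOneStarAlgHom ℂ p)

theorem matSig_sum_kronecker_eq_zero [Nontrivial ι] (hγ : IsCliffordFamily γ)
    (hγh : ∀ k, (γ k).IsHermitian) (hB : ∀ k, (B k).IsHermitian)
    (hBc : ∀ k l, Commute (B k) (B l)) : matSig (∑ k, B k ⊗ₖ γ k) = 0 := by
  set G := ∑ k, B k ⊗ₖ γ k
  have hG : G.IsHermitian := isHermitian_sum_kronecker _ (fun k _ => hB k) fun k _ => hγh k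
  have hP : (∑ k, B k * B k).IsHermitian :=
    isSelfAdjoint_sum _ fun k _ => by rw [← sq]; exact (hB k).pow 2
  have habs : cfc (fun x : ℝ => |x|⁻¹) G = cfc (fun y : ℝ => (√y)⁻¹) (∑ k, B k * B k) ⊗ₖ 1 := by
    rw [← cfc_kronecker_one hP, ← hγ.sum_kronecker_mul_self hBc, ← sq,
      ← cfc_comp_pow _ _ _ ((G.finite_real_spectrum.image _).continuousOn _)]
    simp [Real.sqrt_sq_eq_abs]
  have htrace (X : Matrix n n ℂ) :
      trace (G * (X ⊗ₖ 1)) = ∑ k, trace (B k * X) * trace (γ k) := by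
    simp only [G, Finset.sum_mul, trace_sum, ← mul_kronecker_mul, mul_one, trace_kronecker]
  have h : (matSig G : ℂ) = 0 := by
    rw [matSig_eq_trace_mul_cfc_abs_inv hG, habs, htrace]
    refine Finset.sum_eq_zero fun k _ => ?_
    obtain ⟨l, hl⟩ := exists_ne k
    rw [hγ.trace_eq_zero hl.symm, mul_zero]
  exact_mod_cast h

end CliffordSum

theorem PosSemidef.mul_of_commute {m 𝕜 : Type*} [Fintype m] [DecidableEq m] [RCLike 𝕜]
    {A B : Matrix m m 𝕜} (hA : A.PosSemidef) (hB : B.PosSemidef) (h : Commute A B) :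
    (A * B).PosSemidef := by
  open scoped MatrixOrder in exact (h.mul_nonneg hA.nonneg hB.nonneg).posSemidef

end Matrix

section ReIm

variable {n : ℕ}

theorem isHermitian_mRe (X : Matrix (Fin n) (Fin n) ℂ) : (mRe X).IsHermitian := by
  simp [IsHermitian, mRe, add_comm]

theorem isHermitian_mIm (X : Matrix (Fin n) (Fin n) ℂ) : (mIm X).IsHermitian := by
  simp [IsHermitian, mIm, ← smul_neg]

theorem Matrix.IsHermitian.mRe_eq {A : Matrix (Fin n) (Fin n) ℂ} (hA : A.IsHermitian) :
    mRe A = A := by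
  rw [mRe, hA.eq, ← two_smul ℂ, smul_smul]
  norm_num

theorem Matrix.IsHermitian.mIm_eq_zero {A : Matrix (Fin n) (Fin n) ℂ} (hA : A.IsHermitian) :
    mIm A = 0 := by
  rw [mIm, hA.eq, sub_self, smul_zero]

theorem mRe_mem {S : StarSubalgebra ℂ (Matrix (Fin n) (Fin n) ℂ)} {X : Matrix (Fin n) (Fin n) ℂ}
    (hX : X ∈ S) : mRe X ∈ S :=
  SMulMemClass.smul_mem _ (add_mem hX (star_mem hX))

theorem mIm_mem {S : StarSubalgebra ℂ (Matrix (Fin n) (Fin n) ℂ)} {X : Matrix (Fin n) (Fin n) ℂ}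
    (hX : X ∈ S) : mIm X ∈ S :=
  SMulMemClass.smul_mem _ (sub_mem hX (star_mem hX))

theorem mIm_mul_self_add_mRe_mul_self {u : Matrix (Fin n) (Fin n) ℂ} (hu : u ∈ unitary _) :
    mIm u * mIm u + mRe u * mRe u = 1 := by
  have h1 : uᴴ * u = 1 := Unitary.star_mul_self_of_mem hu
  have h2 : u * uᴴ = 1 := Unitary.mul_star_self_of_mem hu
  have hsq : (u + uᴴ) * (u + uᴴ) - (u - uᴴ) * (u - uᴴ) = (4 : ℂ) • 1 := calc
    _ = u * uᴴ + u * uᴴ + (uᴴ * u + uᴴ * u) := by noncomm_ring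
    _ = (4 : ℂ) • 1 := by rw [h1, h2]; module
  have hI : 1 / (2 * Complex.I) * (1 / (2 * Complex.I)) = -(1 / 2 * (1 / 2)) := by
    field_simp
    simp
  rw [mIm, mRe, smul_mul_smul_comm, smul_mul_smul_comm, hI, neg_smul, neg_add_eq_sub, ← smul_sub,
    hsq, smul_smul]
  norm_num

theorem posSemidef_one_sub_mRe {u : Matrix (Fin n) (Fin n) ℂ} (hu : u ∈ unitary _) :
    (1 - mRe u).PosSemidef := by
  have h1 : uᴴ * u = 1 := Unitary.star_mul_self_of_mem hu
  have h : 1 - mRe u = (1 / 2 : ℝ) • ((1 - u)ᴴ * (1 - u)) := by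
    simp only [mRe, conjTranspose_sub, conjTranspose_one, sub_mul, one_mul, mul_sub, mul_one, h1]
    module
  rw [h]
  exact (posSemidef_conjTranspose_mul_self _).smul (by norm_num)

theorem posDef_sum_mIm_mul_self_add_mul_self {ι : Type*} [Fintype ι] [DecidableEq ι]
    {V : ι → Matrix (Fin n) (Fin n) ℂ} (hV : ∀ k, V k ∈ unitary _)
    (hc : ∀ k l, Commute (V k) (V l)) :
    (∑ k, mIm (V k) * mIm (V k) +
      (∑ k, (1 - mRe (V k)) - 1) * (∑ k, (1 - mRe (V k)) - 1)).PosDef := by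
  set C : ι → Matrix (Fin n) (Fin n) ℂ := fun k => 1 - mRe (V k)
  set S := ∑ k, C k with hS
  have hC (k : ι) : (C k).PosSemidef := posSemidef_one_sub_mRe (hV k)
  have hCmem (k : ι) : C k ∈ StarAlgebra.adjoin ℂ (Set.range V) :=
    sub_mem (one_mem _) (mRe_mem (StarAlgebra.subset_adjoin ℂ _ ⟨k, rfl⟩))
  have hIm (k : ι) : mIm (V k) * mIm (V k) = C k + C k - C k * C k := by
    rw [eq_sub_of_add_eq (mIm_mul_self_add_mRe_mul_self (hV k))]
    simp only [C]
    noncomm_ring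
  have hid : ∑ k, mIm (V k) * mIm (V k) + (S - 1) * (S - 1) = 1 + ∑ k, C k * (S - C k) := calc
    _ = S + S - ∑ k, C k * C k + (S - 1) * (S - 1) := by
      simp only [hIm, Finset.sum_sub_distrib, Finset.sum_add_distrib, ← hS]
    _ = 1 + (S * S - ∑ k, C k * C k) := by noncomm_ring
    _ = 1 + ∑ k, C k * (S - C k) := by
      simp only [mul_sub, Finset.sum_sub_distrib, ← Finset.sum_mul, ← hS]
  rw [hid]
  refine PosDef.one.add_posSemidef (posSemidef_sum _ fun k _ => ?_)
  rw [hS, ← Finset.sum_erase_eq_sub (Finset.mem_univ k)]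
  exact (hC k).mul_of_commute (posSemidef_sum _ fun l _ => hC l)
    (commute_of_mem_starAlgebra_adjoin (Set.forall_mem_range.2 hV)
      (Set.forall_mem_range.2 fun k => Set.forall_mem_range.2 (hc k)) (hCmem k)
      (sum_mem fun l _ => hCmem l))

end ReIm

section Ghat

variable {n d : ℕ} (U : Fin d → Matrix (Fin n) (Fin n) ℂ) (A : Matrix (Fin n) (Fin n) ℂ)

def ghatCoeff : Fin (d + 1) → Matrix (Fin n) (Fin n) ℂ :=
  Fin.snoc (fun j => mIm (U j)) ((d : ℂ) • 1 - ∑ j, mRe (U j) - A)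

theorem ghatCoeff_mem_adjoin (k : Fin (d + 1)) :
    ghatCoeff U A k ∈ StarAlgebra.adjoin ℂ (insert A (Set.range U)) := by
  have hU (j : Fin d) : U j ∈ StarAlgebra.adjoin ℂ (insert A (Set.range U)) :=
    StarAlgebra.subset_adjoin ℂ _ (.inr ⟨j, rfl⟩)
  refine Fin.lastCases ?_ (fun j => ?_) k
  · simp only [ghatCoeff, Fin.snoc_last]
    exact sub_mem (sub_mem (Subalgebra.smul_mem _ (one_mem _) _)
      (sum_mem fun j _ => mRe_mem (hU j))) (StarAlgebra.subset_adjoin ℂ _ (.inl rfl))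
  · simpa [ghatCoeff] using mIm_mem (hU j)

variable {A}

theorem isHermitian_ghatCoeff (hA : A.IsHermitian) (k : Fin (d + 1)) :
    (ghatCoeff U A k).IsHermitian := by
  refine Fin.lastCases ?_ (fun j => ?_) k
  · simp only [ghatCoeff, Fin.snoc_last]
    exact (((IsSelfAdjoint.natCast d).smul (IsSelfAdjoint.one _)).sub
      (isSelfAdjoint_sum _ fun j _ => isHermitian_mRe (U j))).sub hA
  · simpa [ghatCoeff] using isHermitian_mIm (U j)

theorem posDef_sum_ghatCoeff_mul_self (hu : ∀ x ∈ insert A (Set.range U), x ∈ unitary _)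
    (hc : ∀ x ∈ insert A (Set.range U), ∀ y ∈ insert A (Set.range U), Commute x y)
    (hA : A.IsHermitian) : (∑ k, ghatCoeff U A k * ghatCoeff U A k).PosDef := by
  set V : Fin (d + 1) → Matrix (Fin n) (Fin n) ℂ := Fin.snoc U A
  have hV : ∀ k, V k ∈ insert A (Set.range U) :=
    Fin.lastCases (by simp [V]) fun j => by simp [V]
  have hS : ∑ k, (1 - mRe (V k)) - 1 = (d : ℂ) • 1 - ∑ j, mRe (U j) - A := by
    simp only [Fin.sum_univ_castSucc, V, Fin.snoc_castSucc, Fin.snoc_last, hA.mRe_eq,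
      Finset.sum_sub_distrib, Finset.sum_const, Finset.card_univ, Fintype.card_fin,
      Nat.cast_smul_eq_nsmul]
    module
  have hP : ∑ k, ghatCoeff U A k * ghatCoeff U A k =
      ∑ k, mIm (V k) * mIm (V k) + (∑ k, (1 - mRe (V k)) - 1) * (∑ k, (1 - mRe (V k)) - 1) := by
    rw [hS, Fin.sum_univ_castSucc, Fin.sum_univ_castSucc]
    simp only [ghatCoeff, V, Fin.snoc_castSucc, Fin.snoc_last, hA.mIm_eq_zero, mul_zero, add_zero]
  rw [hP]
  exact posDef_sum_mIm_mul_self_add_mul_self (fun k => hu _ (hV k)) fun k l => hc _ (hV k) _ (hV l)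

end Ghat

/-- for pairwise commuting unitaries `U_1, …, U_d`, a Hermitian unitary `A`
commuting with every `U_j`, and a selfadjoint Clifford family `γ_1, …, γ_{d+1}`, the
Hermitian matrix `Ĝ = ∑ Im(U_j) ⊗ γ_j + (d·1 - ∑ Re(U_j) - A) ⊗ γ_{d+1}` is invertible
and `Sig(Ĝ) = 0`. -/
theorem stmt3 {n d' : ℕ} (d : ℕ) (hd : 1 ≤ d)
    (U : Fin d → Matrix (Fin n) (Fin n) ℂ)
    (hU : ∀ j, U j * (U j)ᴴ = 1 ∧ (U j)ᴴ * U j = 1)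
    (hcomm : ∀ i j, U i * U j = U j * U i)
    (A : Matrix (Fin n) (Fin n) ℂ)
    (hAherm : A.IsHermitian)
    (hAunit : A * Aᴴ = 1 ∧ Aᴴ * A = 1)
    (hAcomm : ∀ j, A * U j = U j * A)
    (γ : Fin (d+1) → Matrix (Fin d') (Fin d') ℂ)
    (hγherm : ∀ k, (γ k).IsHermitian)
    (hγcliff : ∀ k l, γ k * γ l + γ l * γ k = (if k = l then (2:ℂ) else 0) • 1)
    (Ghat : Matrix (Fin n × Fin d') (Fin n × Fin d') ℂ)
    (hGhat : Ghat = (∑ j : Fin d, mIm (U j) ⊗ₖ γ j.castSucc) +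
      (((d : ℂ) • (1 : Matrix (Fin n) (Fin n) ℂ) - (∑ j : Fin d, mRe (U j)) - A) ⊗ₖ
        γ (Fin.last d))) :
    Ghat.IsHermitian ∧ IsUnit Ghat ∧ matSig Ghat = 0 := by
  have hu : ∀ x ∈ insert A (Set.range U), x ∈ unitary _ := by
    rintro _ (rfl | ⟨j, rfl⟩)
    exacts [Unitary.mem_iff.2 ⟨hAunit.2, hAunit.1⟩, Unitary.mem_iff.2 ⟨(hU j).2, (hU j).1⟩]
  have hc : ∀ x ∈ insert A (Set.range U), ∀ y ∈ insert A (Set.range U), Commute x y := by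
    rintro _ (rfl | ⟨i, rfl⟩) _ (rfl | ⟨j, rfl⟩)
    exacts [Commute.refl _, hAcomm j, (hAcomm i).symm, hcomm i j]
  have hB : ∀ k l, Commute (ghatCoeff U A k) (ghatCoeff U A l) := fun k l =>
    commute_of_mem_starAlgebra_adjoin hu hc (ghatCoeff_mem_adjoin U A k)
      (ghatCoeff_mem_adjoin U A l)
  have : Nontrivial (Fin (d + 1)) := Fin.nontrivial_iff_two_le.2 (by omega)
  have hG : Ghat = ∑ k, ghatCoeff U A k ⊗ₖ γ k := by
    simp [hGhat, Fin.sum_univ_castSucc, ghatCoeff]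
  subst hG
  exact ⟨isHermitian_sum_kronecker _ (fun k _ => isHermitian_ghatCoeff U hAherm k)
      fun k _ => hγherm k,
    isUnit_sum_kronecker hγcliff hB (posDef_sum_ghatCoeff_mul_self U hu hc hAherm).isUnit,
    matSig_sum_kronecker_eq_zero hγcliff hγherm (isHermitian_ghatCoeff U hAherm) hB⟩
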